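/- For every n ≥ 1, the number of n×n magog matrices whose (2,1) entry equals 1 is (1/(n+1))·C(2n,n) − 1, i.e. the n-th Catalan number minus 1. -/

import Mathlib

/-- An `n × n` square sign matrix: a `{0, 1, -1}`-matrix whose rows and columns
all sum to 1, whose partial column sums lie in `{0, 1}`, and whose partial row
sums are nonnegative. -/
def IsSquareSign (n : ℕ) (A : Fin n → Fin n → ℤ) : Prop :=
  (∀ i j, A i j = -1 ∨ A i j = 0 ∨ A i j = 1) ∧
  (∀ j, ∑ i, A i j = 1) ∧
  (∀ i, ∑ j, A i j = 1) ∧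
  (∀ i j : Fin n, 0 ≤ ∑ i' ∈ Finset.Iic i, A i' j ∧ ∑ i' ∈ Finset.Iic i, A i' j ≤ 1) ∧
  (∀ i j : Fin n, 0 ≤ ∑ j' ∈ Finset.Iic j, A i j')

/-- An `n × n` magog matrix: a square sign matrix satisfying the
`(i,j)`-special inequalities (stated here with 0-based indices `i, j`,
corresponding to the paper's 1-based `i+1, j+1` with `1 ≤ i, j ≤ n-2`). -/
def IsMagog (n : ℕ) (A : Fin n → Fin n → ℤ) : Prop :=
  IsSquareSign n A ∧
  ∀ (i j : ℕ) (hi : i + 2 < n) (hj : j + 2 < n),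
    0 ≤ (∑ j' ∈ Finset.Iic (⟨j, by omega⟩ : Fin n), A ⟨i + 1, by omega⟩ j')
      + (∑ i' ∈ Finset.Iic (⟨i + 1, by omega⟩ : Fin n), A i' ⟨j + 1, by omega⟩)
      - (∑ i' ∈ Finset.Iic (⟨i, by omega⟩ : Fin n), A i' ⟨j, by omega⟩)

/-!
Let `C` be the matrix of column partial sums of a square sign matrix `A`. Its entries are `0` or
`1`, its last row is all ones, and row `i` (counted from `0`) sums to `i + 1`. For a magog matrix
with `A₂₁ = 1`, the special inequalities propagate down from that entry and force `C` to be `1`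
strictly left of the diagonal; row `i` of `C` then has exactly one further `1`, in some column
`i + q i`. So `A` is determined by the sequence `q`, and the magog conditions say exactly that
`q` is weakly decreasing with `q i + i < n`, while `A₂₁ = 1` says `q 0 ≠ 0`. Such staircase
sequences are counted by the Catalan numbers (split at the first `i` with `q i + i = n - 1`), and
removing `q = 0` leaves `catalan n - 1`.
-/

open Finset

theorem Fin.sum_Iic_eq_sum_range {M : Type*} [AddCommMonoid M] {n : ℕ} (f : ℕ → M)
    (i : Fin n) :
    ∑ j ∈ Iic i, f j = ∑ k ∈ range (i + 1), f k := by
  rw [Nat.range_succ_eq_Iic, ← Fin.map_valEmbedding_Iic, sum_map]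
  rfl

theorem Fin.Iic_mk_zero {n : ℕ} (h : 0 < n) : Iic (⟨0, h⟩ : Fin n) = {⟨0, h⟩} := by
  ext
  simp [Fin.le_def, Fin.ext_iff]

theorem exists_eq_ite_of_sum_eq_one {α : Type*} [Fintype α] [DecidableEq α] (g : α → ℤ)
    (h01 : ∀ x, g x = 0 ∨ g x = 1) (hsum : ∑ x, g x = 1) :
    ∃ a, ∀ x, g x = if x = a then 1 else 0 := by
  have hg : ∀ x, g x = if g x = 1 then 1 else 0 := fun x => by
    rcases h01 x with h | h <;> simp [h]
  rw [sum_congr rfl fun x _ => hg x, sum_boole, Nat.cast_eq_one, card_eq_one] at hsum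
  obtain ⟨a, ha⟩ := hsum
  refine ⟨a, fun x => ?_⟩
  rw [hg x]
  congr 1
  simpa using congr_arg (x ∈ ·) ha

structure IsStaircase (n : ℕ) (q : ℕ → ℕ) : Prop where
  add_lt : ∀ i < n, q i + i < n
  antitone : Antitone q
  eq_zero : ∀ i, n ≤ i → q i = 0

namespace IsStaircase

variable {n : ℕ} {q : ℕ → ℕ}

theorem zero (n : ℕ) : IsStaircase n 0 :=
  ⟨fun _ hi => by simpa using hi, antitone_const, fun _ _ => rfl⟩

theorem add_lt_or_eq_zero (hq : IsStaircase n q) (i : ℕ) : q i + i < n ∨ q i = 0 :=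
  (lt_or_ge i n).imp (hq.add_lt i) (hq.eq_zero i)

theorem eq_of_forall_lt {q' : ℕ → ℕ} (hq : IsStaircase n q) (hq' : IsStaircase n q')
    (h : ∀ i < n, q i = q' i) : q = q' := by
  funext i
  rcases lt_or_ge i n with hi | hi
  · exact h i hi
  · rw [hq.eq_zero i hi, hq'.eq_zero i hi]

theorem eq_zero_iff (hq : IsStaircase n q) : q = 0 ↔ q 0 = 0 :=
  ⟨fun h => h ▸ rfl, fun h => funext fun i =>
    Nat.eq_zero_of_le_zero (h ▸ hq.antitone i.zero_le)⟩

instance (n : ℕ) : Finite {q // IsStaircase n q} :=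
  Finite.of_injective
    (fun q (i : Fin n) => (⟨q.1 i, by have := q.2.add_lt i i.2; omega⟩ : Fin n))
    fun q q' h => Subtype.ext <| q.2.eq_of_forall_lt q'.2 fun i hi =>
      congr_arg Fin.val (congr_fun h ⟨i, hi⟩)

theorem exists_first_add_eq (hq : IsStaircase (n + 1) q) :
    ∃ i ≤ n, q i + i = n ∧ ∀ k < i, q k + k < n := by
  have hex : ∃ i, q i + i = n := ⟨n, by have := hq.add_lt n n.lt_succ_self; omega⟩
  have hfind := Nat.find_spec hex
  refine ⟨Nat.find hex, by omega, hfind, fun k hk => ?_⟩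
  have := Nat.find_min hex hk
  have := hq.add_lt k (by omega)
  omega

end IsStaircase

/-- Inverse of cutting a staircase of size `n + 1` at the first `i` with `q i + i = n`. -/
def stairGlue (n i : ℕ) (a b : ℕ → ℕ) (k : ℕ) : ℕ :=
  if k < i then a k + (n - i) else if k = i then n - i else b (k - (i + 1))

def stairSplitLeft (n i : ℕ) (q : ℕ → ℕ) (k : ℕ) : ℕ :=
  if k < i then q k - (n - i) else 0

def stairSplitRight (i : ℕ) (q : ℕ → ℕ) (k : ℕ) : ℕ :=
  q (i + 1 + k)

section Glue

variable {n i : ℕ} {q a b : ℕ → ℕ}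

theorem IsStaircase.glue (hi : i ≤ n) (ha : IsStaircase i a) (hb : IsStaircase (n - i) b) :
    IsStaircase (n + 1) (stairGlue n i a b) where
  add_lt k hk := by
    unfold stairGlue
    split_ifs with hki
    · have := ha.add_lt k hki; omega
    · omega
    · rcases hb.add_lt_or_eq_zero (k - (i + 1)) with h | h <;> omega
  antitone := antitone_nat_of_succ_le fun k => by
    unfold stairGlue
    split_ifs <;> first
      | omega
      | exact Nat.add_le_add_right (ha.antitone k.le_succ) _
      | exact hb.antitone (by omega)
      | (rcases hb.add_lt_or_eq_zero (k + 1 - (i + 1)) with h | h <;> omega)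
  eq_zero k hk := by
    unfold stairGlue
    rw [if_neg (by omega), if_neg (by omega)]
    exact hb.eq_zero _ (by omega)

theorem IsStaircase.splitLeft (hq : IsStaircase (n + 1) q) (hlt : ∀ k < i, q k + k < n) :
    IsStaircase i (stairSplitLeft n i q) where
  add_lt k hk := by
    have := hlt k hk
    simp only [stairSplitLeft, if_pos hk]
    omega
  antitone k l hkl := by
    unfold stairSplitLeft
    split_ifs <;> first | omega | exact Nat.sub_le_sub_right (hq.antitone hkl) _
  eq_zero _ hk := if_neg (by omega)

theorem IsStaircase.splitRight (hq : IsStaircase (n + 1) q) (hi : i ≤ n) :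
    IsStaircase (n - i) (stairSplitRight i q) where
  add_lt k hk := by
    have := hq.add_lt (i + 1 + k) (by omega)
    simp only [stairSplitRight]
    omega
  antitone _ _ hkl := hq.antitone (by omega)
  eq_zero _ hk := hq.eq_zero _ (by omega)

theorem stairGlue_split (hq : IsStaircase (n + 1) q) (hqi : q i + i = n) :
    stairGlue n i (stairSplitLeft n i q) (stairSplitRight i q) = q := by
  funext k
  unfold stairGlue stairSplitLeft stairSplitRight
  split_ifs with hki hki'
  · have := hq.antitone hki.le; omega
  · subst hki'; omega
  · congr 1; omega

theorem stairSplitLeft_glue (ha : IsStaircase i a) :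
    stairSplitLeft n i (stairGlue n i a b) = a := by
  funext k
  unfold stairSplitLeft stairGlue
  split_ifs with hki
  · omega
  · exact (ha.eq_zero k (not_lt.1 hki)).symm

theorem stairSplitRight_glue : stairSplitRight i (stairGlue n i a b) = b := by
  funext k
  unfold stairSplitRight stairGlue
  rw [if_neg (by omega), if_neg (by omega), Nat.add_sub_cancel_left]

theorem stairGlue_add_eq_iff (hi : i ≤ n) (ha : IsStaircase i a) {k : ℕ} (hk : k ≤ i) :
    stairGlue n i a b k + k = n ↔ k = i := by
  unfold stairGlue
  split_ifs with hki
  · have := ha.add_lt k hki; omega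
  · omega
  · omega

theorem stairGlue_inj {i' : ℕ} {a' b' : ℕ → ℕ} (hi : i ≤ n) (hi' : i' ≤ n)
    (ha : IsStaircase i a) (ha' : IsStaircase i' a')
    (h : stairGlue n i a b = stairGlue n i' a' b') : i = i' ∧ a = a' ∧ b = b' := by
  have hii' : i = i' := by
    by_contra hne
    rcases Nat.lt_or_gt_of_ne hne with hlt | hlt
    · have := (stairGlue_add_eq_iff hi' ha' hlt.le).1
        (h ▸ (stairGlue_add_eq_iff hi ha le_rfl).2 rfl)
      omega
    · have := (stairGlue_add_eq_iff hi ha hlt.le).1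
        (h ▸ (stairGlue_add_eq_iff hi' ha' le_rfl).2 rfl)
      omega
  subst hii'
  refine ⟨rfl, ?_, ?_⟩
  · rw [← stairSplitLeft_glue (n := n) (b := b) ha, h, stairSplitLeft_glue ha']
  · rw [← stairSplitRight_glue (n := n) (i := i) (a := a) (b := b), h, stairSplitRight_glue]

end Glue

def stairGlueMap (n : ℕ)
    (x : Σ i : Fin (n + 1), {a // IsStaircase i a} × {b // IsStaircase (n - i) b}) :
    {q // IsStaircase (n + 1) q} :=
  ⟨stairGlue n x.1 x.2.1 x.2.2, .glue (Nat.lt_succ_iff.1 x.1.2) x.2.1.2 x.2.2.2⟩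

theorem stairGlueMap_bijective (n : ℕ) : Function.Bijective (stairGlueMap n) := by
  constructor
  · rintro ⟨⟨i, _⟩, ⟨a, ha⟩, ⟨b, _⟩⟩ ⟨⟨j, _⟩, ⟨a', ha'⟩, ⟨b', _⟩⟩ h
    obtain ⟨rfl, rfl, rfl⟩ :=
      stairGlue_inj (by omega) (by omega) ha ha' (congr_arg Subtype.val h)
    rfl
  · rintro ⟨q, hq⟩
    obtain ⟨i, hi, hqi, hlt⟩ := hq.exists_first_add_eq
    exact ⟨⟨⟨i, by omega⟩, ⟨_, hq.splitLeft hlt⟩, ⟨_, hq.splitRight hi⟩⟩,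
      Subtype.ext (stairGlue_split hq hqi)⟩

theorem card_isStaircase (n : ℕ) : Nat.card {q // IsStaircase n q} = catalan n := by
  induction n using Nat.strong_induction_on with
  | _ n ih =>
    cases n with
    | zero =>
      rw [catalan_zero, Nat.card_eq_one_iff_exists]
      exact ⟨⟨0, .zero 0⟩, fun q => Subtype.ext (funext fun i => q.2.eq_zero i i.zero_le)⟩
    | succ n =>
      rw [← Nat.card_eq_of_bijective _ (stairGlueMap_bijective n), Nat.card_sigma, catalan_succ]
      refine sum_congr rfl fun i _ => ?_
      rw [Nat.card_prod, ih i (by omega), ih (n - i) (by omega)]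

theorem ncard_isStaircase_pos (n : ℕ) :
    {q | IsStaircase n q ∧ 0 < q 0}.ncard = catalan n - 1 := by
  have : {q | IsStaircase n q ∧ 0 < q 0} = {q | IsStaircase n q} \ {0} :=
    Set.ext fun q => and_congr_right fun hq =>
      Nat.pos_iff_ne_zero.trans hq.eq_zero_iff.not.symm
  rw [this, Set.ncard_sdiff_singleton_of_mem (s := {q | IsStaircase n q}) (IsStaircase.zero n),
    ← Nat.card_coe_set_eq]
  exact congrArg (· - 1) (card_isStaircase n)

section ColPartialSum

variable {n : ℕ}

def colPartialSum {M : Type*} [AddCommMonoid M] (A : Fin n → Fin n → M) (i j : Fin n) : M :=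
  ∑ i' ∈ Iic i, A i' j

theorem colPartialSum_zero {M : Type*} [AddCommMonoid M] (A : Fin n → Fin n → M) (h : 0 < n)
    (j : Fin n) : colPartialSum A ⟨0, h⟩ j = A ⟨0, h⟩ j := by
  rw [colPartialSum, Fin.Iic_mk_zero, sum_singleton]

theorem colPartialSum_succ {M : Type*} [AddCommMonoid M] (A : Fin n → Fin n → M) {k : ℕ}
    (hk : k + 1 < n) (j : Fin n) :
    colPartialSum A ⟨k + 1, hk⟩ j =
      colPartialSum A ⟨k, by omega⟩ j + A ⟨k + 1, hk⟩ j := by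
  have : Iic (⟨k + 1, hk⟩ : Fin n) =
      cons ⟨k + 1, hk⟩ (Iic ⟨k, by omega⟩) (by simp [Fin.le_def]) := by
    ext
    simp only [mem_Iic, mem_cons, Fin.le_def, Fin.ext_iff]
    omega
  rw [colPartialSum, this, sum_cons, add_comm]
  rfl

theorem colPartialSum_injective {M : Type*} [AddCancelCommMonoid M] :
    Function.Injective (colPartialSum : (Fin n → Fin n → M) → Fin n → Fin n → M) := by
  intro A B h
  funext ⟨i, hi⟩ j
  cases i with
  | zero => simpa only [colPartialSum_zero] using congr_fun₂ h ⟨0, hi⟩ j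
  | succ k =>
    have := congr_fun₂ h ⟨k + 1, hi⟩ j
    rwa [colPartialSum_succ, colPartialSum_succ, congr_fun₂ h ⟨k, by omega⟩ j,
      add_left_cancel_iff] at this

variable {A : Fin n → Fin n → ℤ}

theorem IsSquareSign.colPartialSum_last (hA : IsSquareSign n A) (h : 0 < n) (j : Fin n) :
    colPartialSum A ⟨n - 1, by omega⟩ j = 1 := by
  rw [← hA.2.1 j, colPartialSum,
    eq_univ_of_forall fun i => mem_Iic.2 (Fin.le_def.2 (Nat.le_sub_one_of_lt i.2))]

theorem IsSquareSign.sum_colPartialSum (hA : IsSquareSign n A) (i : Fin n) :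
    ∑ j, colPartialSum A i j = i + 1 := by
  simp only [colPartialSum]
  rw [sum_comm, sum_congr rfl fun i' _ => hA.2.2.1 i', sum_const, Fin.card_Iic]
  simp

theorem IsSquareSign.exists_colPartialSum_eq_ite (hA : IsSquareSign n A) (i : Fin n)
    (hlt : ∀ j < i, colPartialSum A i j = 1) :
    ∃ p, i ≤ p ∧ ∀ j, colPartialSum A i j = if j < i ∨ j = p then 1 else 0 := by
  set g := fun j => colPartialSum A i j - if j < i then 1 else 0
  have h01 : ∀ j, g j = 0 ∨ g j = 1 := fun j => by
    have : 0 ≤ colPartialSum A i j ∧ colPartialSum A i j ≤ 1 := hA.2.2.2.1 i j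
    by_cases hj : j < i
    · simp [g, hj, hlt j hj]
    · simp only [g, hj, if_false]
      omega
  have hsum : ∑ j, g j = 1 := by
    simp only [g, sum_sub_distrib, hA.sum_colPartialSum, sum_boole, filter_gt_eq_Iio,
      Fin.card_Iio]
    ring
  obtain ⟨p, hp⟩ := exists_eq_ite_of_sum_eq_one g h01 hsum
  have hip : i ≤ p := not_lt.1 fun hpi => by simpa [g, hpi, hlt p hpi] using hp p
  refine ⟨p, hip, fun j => ?_⟩
  have := hp j
  simp only [g] at this
  split_ifs at this ⊢ <;> omega

end ColPartialSum

def stairColSum (q : ℕ → ℕ) (i j : ℕ) : ℤ :=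
  if j < i ∨ j = q i + i then 1 else 0

def stairEntry (q : ℕ → ℕ) : ℕ → ℕ → ℤ
  | 0, j => stairColSum q 0 j
  | i + 1, j => stairColSum q (i + 1) j - stairColSum q i j

def stairMatrix (n : ℕ) (q : ℕ → ℕ) (i j : Fin n) : ℤ :=
  stairEntry q i j

section StairMatrix

variable {n : ℕ} {q : ℕ → ℕ}

theorem sum_range_stairEntry (q : ℕ → ℕ) (i j : ℕ) :
    ∑ k ∈ range (i + 1), stairEntry q k j = stairColSum q i j := by
  induction i with
  | zero => simp [stairEntry]
  | succ i ih => rw [sum_range_succ, ih, stairEntry]; ring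

theorem sum_range_stairColSum (q : ℕ → ℕ) (i j : ℕ) :
    ∑ k ∈ range j, stairColSum q i k =
      ((min i j : ℕ) : ℤ) + if q i + i < j then 1 else 0 := by
  induction j with
  | zero => simp
  | succ j ih =>
    rw [sum_range_succ, ih, stairColSum]
    split_ifs <;> omega

theorem colPartialSum_stairMatrix (q : ℕ → ℕ) (i j : Fin n) :
    colPartialSum (stairMatrix n q) i j = stairColSum q i j :=
  (Fin.sum_Iic_eq_sum_range (fun k => stairEntry q k j) i).trans (sum_range_stairEntry q i j)

theorem sum_Iic_stairMatrix (q : ℕ → ℕ) (i j : Fin n) :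
    ∑ j' ∈ Iic j, stairMatrix n q i j' = ∑ k ∈ range (j + 1), stairEntry q i k :=
  Fin.sum_Iic_eq_sum_range (fun k => stairEntry q i k) j

theorem isSquareSign_stairMatrix (hq : ∀ i < n, q i + i < n) :
    IsSquareSign n (stairMatrix n q) := by
  refine ⟨fun i j => ?_, fun j => ?_, fun i => ?_, fun i j => ?_, fun i j => ?_⟩
  · obtain ⟨_ | i, hi⟩ := i <;>
      simp only [stairMatrix, stairEntry, stairColSum] <;> split_ifs <;> omega
  · obtain ⟨m, rfl⟩ := Nat.exists_eq_add_one_of_ne_zero (Fin.pos j).ne'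
    have := hq m m.lt_succ_self
    refine (Fin.sum_univ_eq_sum_range (fun k => stairEntry q k j) _).trans ?_
    rw [sum_range_stairEntry, stairColSum, if_pos (by omega)]
  · have := hq i i.2
    refine (Fin.sum_univ_eq_sum_range (fun k => stairEntry q i k) _).trans ?_
    obtain ⟨_ | i, hi⟩ := i
    · simp only [stairEntry, sum_range_stairColSum]; split_ifs <;> omega
    · have := hq i (by omega)
      simp only [stairEntry, sum_sub_distrib, sum_range_stairColSum]; split_ifs <;> omega
  · rw [← colPartialSum, colPartialSum_stairMatrix, stairColSum]; split_ifs <;> omega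
  · rw [sum_Iic_stairMatrix]
    obtain ⟨_ | i, hi⟩ := i
    · simp only [stairEntry, sum_range_stairColSum]; split_ifs <;> omega
    · simp only [stairEntry, sum_sub_distrib, sum_range_stairColSum]; split_ifs <;> omega

theorem isMagog_stairMatrix_iff (hq : ∀ i < n, q i + i < n) :
    IsMagog n (stairMatrix n q) ↔ ∀ i, i + 1 < n → q (i + 1) ≤ q i := by
  have special : ∀ i j (hi : i + 2 < n) (hj : j + 2 < n),
      (0 ≤ ∑ j' ∈ Iic (⟨j, by omega⟩ : Fin n), stairMatrix n q ⟨i + 1, by omega⟩ j'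
        + colPartialSum (stairMatrix n q) ⟨i + 1, by omega⟩ ⟨j + 1, by omega⟩
        - colPartialSum (stairMatrix n q) ⟨i, by omega⟩ ⟨j, by omega⟩) ↔
      (j = q i + i → q (i + 1) ≤ q i) := by
    intro i j hi hj
    have := hq (i + 1) (by omega)
    rw [sum_Iic_stairMatrix, colPartialSum_stairMatrix, colPartialSum_stairMatrix]
    simp only [stairEntry, sum_sub_distrib, sum_range_stairColSum]
    simp only [stairColSum]
    split_ifs <;> omega
  refine ⟨fun hm i hi => ?_, fun h => ⟨isSquareSign_stairMatrix hq, fun i j hi hj =>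
    (special i j hi hj).2 fun _ => h i (by omega)⟩⟩
  by_contra hlt
  have := hq (i + 1) hi
  have hi₂ : i + 2 < n := by omega
  have hj₂ : q i + i + 2 < n := by omega
  exact hlt ((special i _ hi₂ hj₂).1 (hm.2 i _ hi₂ hj₂) rfl)

theorem stairMatrix_one_zero (h : 1 < n) :
    stairMatrix n q ⟨1, h⟩ ⟨0, by omega⟩ = 1 ↔ 0 < q 0 := by
  simp only [stairMatrix, stairEntry, stairColSum]
  split_ifs <;> omega

theorem stairMatrix_injOn : Set.InjOn (stairMatrix n) {q | IsStaircase n q} := by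
  intro q hq q' hq' h
  refine hq.eq_of_forall_lt hq' fun i hi => ?_
  have := congr_fun₂ (congr_arg colPartialSum h) ⟨i, hi⟩ ⟨q i + i, hq.add_lt i hi⟩
  simp only [colPartialSum_stairMatrix, stairColSum, or_true, if_true] at this
  split_ifs at this <;> omega

end StairMatrix

section Magog

variable {n : ℕ} {A : Fin n → Fin n → ℤ}

theorem IsMagog.colPartialSum_eq_one_of_lt (hm : IsMagog n A) (h : 1 < n)
    (hA : A ⟨1, h⟩ ⟨0, by omega⟩ = 1) (i j : Fin n) (hji : j < i) :
    colPartialSum A i j = 1 := by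
  have hC : ∀ i j, 0 ≤ colPartialSum A i j ∧ colPartialSum A i j ≤ 1 := hm.1.2.2.2.1
  obtain ⟨i, hi⟩ := i
  simp only [Fin.lt_def] at hji
  induction i generalizing j with
  | zero => exact absurd hji (Nat.not_lt_zero _)
  | succ k ih =>
    by_cases hlast : k + 2 = n
    · have : (⟨k + 1, hi⟩ : Fin n) = ⟨n - 1, by omega⟩ := Fin.ext (by simp only; omega)
      rw [this]
      exact hm.1.colPartialSum_last (by omega) j
    obtain ⟨_ | t, hj⟩ := j
    · have hA0 : 0 ≤ A ⟨k + 1, hi⟩ ⟨0, hj⟩ := by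
        simpa [Fin.Iic_mk_zero] using hm.1.2.2.2.2 ⟨k + 1, hi⟩ ⟨0, hj⟩
      have := hC ⟨k + 1, hi⟩ ⟨0, hj⟩
      rw [colPartialSum_succ] at this ⊢
      cases k with
      | zero =>
        have : A ⟨0 + 1, hi⟩ ⟨0, hj⟩ = 1 := hA
        have := hC ⟨0, by omega⟩ ⟨0, hj⟩
        omega
      | succ k =>
        have := ih ⟨0, hj⟩ (by omega) (by simp)
        omega
    -- In the special inequality at `(k, t)` the row sum is `≤ 0`, since row `k` of the
    -- column partial sums is already `1` on columns `≤ t`.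
    · simp only at hji
      have hsp : 0 ≤ ∑ j' ∈ Iic (⟨t, by omega⟩ : Fin n), A ⟨k + 1, hi⟩ j'
          + colPartialSum A ⟨k + 1, hi⟩ ⟨t + 1, hj⟩
          - colPartialSum A ⟨k, by omega⟩ ⟨t, by omega⟩ :=
        hm.2 k t (by omega) (by omega)
      have hrow : ∑ j' ∈ Iic (⟨t, by omega⟩ : Fin n), A ⟨k + 1, hi⟩ j' ≤ 0 :=
        sum_nonpos fun j' hj' => by
          rw [mem_Iic, Fin.le_def] at hj'
          have := colPartialSum_succ A hi j'
          have := hC ⟨k + 1, hi⟩ j'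
          have := ih j' (by omega) (by simp only at hj'; omega)
          omega
      have := ih ⟨t, by omega⟩ (by omega) (by simp only; omega)
      have := hC ⟨k + 1, hi⟩ ⟨t + 1, hj⟩
      omega

theorem IsMagog.exists_stairMatrix_eq (hm : IsMagog n A) (h : 1 < n)
    (hA : A ⟨1, h⟩ ⟨0, by omega⟩ = 1) :
    ∃ q, (IsStaircase n q ∧ 0 < q 0) ∧ stairMatrix n q = A := by
  choose p hip hp using fun i =>
    hm.1.exists_colPartialSum_eq_ite i fun j hj => hm.colPartialSum_eq_one_of_lt h hA i j hj
  set q : ℕ → ℕ := fun k => if hk : k < n then p ⟨k, hk⟩ - k else 0 with hq_def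
  have hpq : ∀ i : Fin n, (p i : ℕ) = q i + i := fun i => by
    have := hip i
    simp only [hq_def, i.2, dif_pos, Fin.eta, Fin.le_def] at this ⊢
    omega
  have hq : ∀ i < n, q i + i < n := fun i hi => hpq ⟨i, hi⟩ ▸ (p _).2
  have hqA : stairMatrix n q = A := colPartialSum_injective <| funext₂ fun i j => by
    simp only [colPartialSum_stairMatrix, hp, stairColSum, Fin.lt_def, Fin.ext_iff, hpq]
  have hanti := (isMagog_stairMatrix_iff hq).1 (hqA ▸ hm)
  refine ⟨q, ⟨⟨hq, antitone_nat_of_succ_le fun i => ?_, fun i hi => dif_neg (by omega)⟩,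
    (stairMatrix_one_zero h).1 (hqA ▸ hA)⟩, hqA⟩
  rcases lt_or_ge (i + 1) n with hi | hi
  · exact hanti i hi
  · simp [hq_def, show ¬i + 1 < n by omega]

end Magog

theorem image_stairMatrix {n : ℕ} (hn : 0 < n) :
    stairMatrix n '' {q | IsStaircase n q ∧ 0 < q 0} =
      {A | IsMagog n A ∧ ∃ h : 1 < n, A ⟨1, h⟩ ⟨0, hn⟩ = 1} := by
  ext A
  constructor
  · rintro ⟨q, ⟨hq, hq0⟩, rfl⟩
    have h : 1 < n := by have := hq.add_lt 0 hn; omega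
    exact ⟨(isMagog_stairMatrix_iff hq.add_lt).2 fun i _ => hq.antitone i.le_succ, h,
      (stairMatrix_one_zero h).2 hq0⟩
  · rintro ⟨hm, h, hA⟩
    exact hm.exists_stairMatrix_eq h hA

/-- The number of `n × n` magog matrices whose `(2,1)` entry equals `1` is the
`n`-th Catalan number minus one. -/
theorem card_magog_21 (n : ℕ) (hn : 0 < n) :
    Nat.card {A : Fin n → Fin n → ℤ //
        IsMagog n A ∧ ∃ h : 1 < n, A ⟨1, h⟩ ⟨0, hn⟩ = 1} =
      (2 * n).choose n / (n + 1) - 1 := by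
  rw [← Set.coe_ofPred, Nat.card_coe_set_eq, ← image_stairMatrix hn,
    (stairMatrix_injOn.mono fun _ hq => hq.1).ncard_image, ncard_isStaircase_pos,
    catalan_eq_centralBinom_div, Nat.centralBinom]
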